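/- Fix a graph G, a function f : V(G) → Z⁺, and a vertex v with f(v) > d(v). If G − v is f-swappable, then G is f-swappable. -/

import Mathlib

/-!
Restrict two `L`-colorings of `G` to `G - v`, connect the restrictions by Kempe swaps there, and
lift each swap to `G`. A swap whose chain misses `v` lifts verbatim. If the chain reaches `v`, either
`L(v)` has a color outside `{a, b}` unused on `N(v)`, and recoloring `v` with it first detaches `v`
from the chain; or, since `|L(v)| > d(v)`, the neighbors of `v` carry distinct colors, so `v` meets
the chain through a single neighbor and the same swap in `G` stays valid at `v`. Finally `v` is
recolored to its target color, which none of its neighbors uses.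
-/

noncomputable section
open scoped Classical

/-- `φ` is a proper `L`-coloring of `G`: every vertex gets a color from its list,
and adjacent vertices get distinct colors. -/
def IsLColoring {V : Type*} (G : SimpleGraph V) (L : V → Finset ℕ) (φ : V → ℕ) : Prop :=
  (∀ v, φ v ∈ L v) ∧ ∀ ⦃u w⦄, G.Adj u w → φ u ≠ φ w

/-- `KempeChain G φ a b x y` : `y` lies in the `a,b`-component of `x`, i.e. `y` is reachable
from `x` in the subgraph induced by the vertices colored `a` or `b` by `φ`. -/
def KempeChain {V : Type*} (G : SimpleGraph V) (φ : V → ℕ) (a b : ℕ) : V → V → Prop :=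
  Relation.ReflTransGen fun u w => G.Adj u w ∧ (φ u = a ∨ φ u = b) ∧ (φ w = a ∨ φ w = b)

/-- The coloring obtained from `φ` by performing an `(a,b)`-Kempe swap on the
`a,b`-component containing `x`. -/
def kempeSwap {V : Type*} (G : SimpleGraph V) (φ : V → ℕ) (a b : ℕ) (x : V) : V → ℕ := fun w =>
  if KempeChain G φ a b x w then (if φ w = a then b else if φ w = b then a else φ w) else φ w

/-- `ψ` is obtained from `φ` by a single `L`-valid Kempe swap. -/
def KempeStep {V : Type*} (G : SimpleGraph V) (L : V → Finset ℕ) (φ ψ : V → ℕ) : Prop :=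
  ∃ a b x, a ≠ b ∧ (φ x = a ∨ φ x = b) ∧ ψ = kempeSwap G φ a b x ∧ IsLColoring G L ψ

/-- Two colorings are `L`-equivalent if one can be transformed into the other by a
sequence of `L`-valid Kempe swaps. -/
def LEquiv {V : Type*} (G : SimpleGraph V) (L : V → Finset ℕ) (φ ψ : V → ℕ) : Prop :=
  Relation.ReflTransGen (KempeStep G L) φ ψ

/-- `G` is `L`-swappable: every two of its `L`-colorings are `L`-equivalent. -/
def LSwappable {V : Type*} (G : SimpleGraph V) (L : V → Finset ℕ) : Prop :=
  ∀ φ ψ, IsLColoring G L φ → IsLColoring G L ψ → LEquiv G L φ ψ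

/-- `G` is `f`-swappable: `G` is `L`-swappable whenever `L` is a list assignment with
`|L(v)| = f(v)` for each vertex `v`. -/
def FSwappable {V : Type*} (G : SimpleGraph V) (f : V → ℕ) : Prop :=
  ∀ L : V → Finset ℕ, (∀ v, (L v).card = f v) → LSwappable G L

/-- `G` is `f`-choosable: `G` admits an `L`-coloring whenever `L` is a list assignment
with `|L(v)| = f(v)` for each vertex `v`. -/
def FChoosable {V : Type*} (G : SimpleGraph V) (f : V → ℕ) : Prop :=
  ∀ L : V → Finset ℕ, (∀ v, (L v).card = f v) → ∃ φ, IsLColoring G L φ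

section KempeLift

variable {V : Type*} {G : SimpleGraph V} {L : V → Finset ℕ} {Φ : V → ℕ} {a b : ℕ}

theorem KempeChain.color_mem {x w : V} (hx : Φ x = a ∨ Φ x = b)
    (h : KempeChain G Φ a b x w) : Φ w = a ∨ Φ w = b := by
  induction h with
  | refl => exact hx
  | tail _ hstep _ => exact hstep.2.2

theorem IsLColoring.induce (hΦ : IsLColoring G L Φ) (s : Set V) :
    IsLColoring (G.induce s) (fun z => L z) (fun z => Φ z) :=
  ⟨fun z => hΦ.1 z, fun _ _ h => hΦ.2 h⟩

theorem KempeChain.of_induce {s : Set V} {x y : s}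
    (h : KempeChain (G.induce s) (fun z => Φ z) a b x y) : KempeChain G Φ a b x y := by
  induction h with
  | refl => exact .refl
  | tail _ hstep ih => exact ih.tail hstep

theorem kempeSwap_adj_ne (hΦ : ∀ ⦃u w⦄, G.Adj u w → Φ u ≠ Φ w) (x : V) ⦃u w : V⦄
    (h : G.Adj u w) : kempeSwap G Φ a b x u ≠ kempeSwap G Φ a b x w := by
  have hne := hΦ h
  have extend : ∀ {p q}, G.Adj p q → KempeChain G Φ a b x p → ¬ KempeChain G Φ a b x q →
      (Φ p = a ∨ Φ p = b) → Φ q ≠ a ∧ Φ q ≠ b := fun hpq hp hq cp =>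
    ⟨fun cq => hq (hp.tail ⟨hpq, cp, .inl cq⟩), fun cq => hq (hp.tail ⟨hpq, cp, .inr cq⟩)⟩
  have := extend h
  have := extend h.symm
  unfold kempeSwap
  split_ifs <;> grind

theorem kempeSwap_eq_update (hΦ : ∀ ⦃u w⦄, G.Adj u w → Φ u ≠ Φ w) {v : V} {d : ℕ}
    (hd : ∀ u, G.Adj v u → Φ u ≠ d) : kempeSwap G Φ (Φ v) d v = Function.update Φ v d := by
  have only_v : ∀ w, KempeChain G Φ (Φ v) d v w → w = v := by
    intro w h
    rcases Relation.ReflTransGen.cases_head h with rfl | ⟨u, hvu, -⟩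
    · rfl
    · exact (hvu.2.2.elim (hΦ hvu.1).symm (hd u hvu.1)).elim
  funext w
  by_cases hw : w = v
  · subst hw
    simp [kempeSwap, KempeChain, Relation.ReflTransGen.refl]
  · have : ¬ KempeChain G Φ (Φ v) d v w := fun h => hw (only_v w h)
    simp [kempeSwap, hw, this]

theorem IsLColoring.update (hΦ : IsLColoring G L Φ) {v : V} {d : ℕ} (hdL : d ∈ L v)
    (hd : ∀ u, G.Adj v u → Φ u ≠ d) : IsLColoring G L (Function.update Φ v d) := by
  refine ⟨fun w => ?_, fun p q hpq => ?_⟩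
  · by_cases hw : w = v
    · subst hw; simpa using hdL
    · simpa [hw] using hΦ.1 w
  · by_cases hp : p = v <;> by_cases hq : q = v
    · exact (G.loopless.irrefl _ (hp ▸ hq ▸ hpq)).elim
    · subst hp; simpa [hq] using (hd q hpq).symm
    · subst hq; simpa [hp] using hd p hpq.symm
    · simpa [hp, hq] using hΦ.2 hpq

theorem kempeStep_update (hΦ : IsLColoring G L Φ) {v : V} {d : ℕ} (hdL : d ∈ L v)
    (hdv : Φ v ≠ d) (hd : ∀ u, G.Adj v u → Φ u ≠ d) :
    KempeStep G L Φ (Function.update Φ v d) :=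
  ⟨Φ v, d, v, hdv, .inl rfl, (kempeSwap_eq_update hΦ.2 hd).symm, hΦ.update hdL hd⟩

theorem LEquiv.isLColoring {Ψ : V → ℕ} (hΦ : IsLColoring G L Φ) (h : LEquiv G L Φ Ψ) :
    IsLColoring G L Ψ := by
  induction h with
  | refl => exact hΦ
  | tail _ hstep _ =>
    obtain ⟨-, -, -, -, -, -, hΨ⟩ := hstep
    exact hΨ

section Induce

variable {s : Set V} {x : s}

theorem kempeSwap_induce_apply
    (hiff : ∀ w : s, KempeChain G Φ a b x w ↔ KempeChain (G.induce s) (fun z => Φ z) a b x w)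
    (w : s) : kempeSwap G Φ a b x w = kempeSwap (G.induce s) (fun z => Φ z) a b x w := by
  simp only [kempeSwap, hiff]

theorem kempeStep_of_induce (hΦ : IsLColoring G L Φ) (hab : a ≠ b) (hx : Φ x = a ∨ Φ x = b)
    (hτ : IsLColoring (G.induce s) (fun z => L z)
      (kempeSwap (G.induce s) (fun z => Φ z) a b x))
    (hiff : ∀ w : s, KempeChain G Φ a b x w ↔ KempeChain (G.induce s) (fun z => Φ z) a b x w)
    (hout : ∀ w ∉ s, kempeSwap G Φ a b x w ∈ L w) :
    KempeStep G L Φ (kempeSwap G Φ a b x) := by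
  refine ⟨a, b, x, hab, hx, rfl, fun w => ?_, kempeSwap_adj_ne hΦ.2 x⟩
  by_cases hw : w ∈ s
  · simpa [kempeSwap_induce_apply hiff ⟨w, hw⟩] using hτ.1 ⟨w, hw⟩
  · exact hout w hw

end Induce

theorem Finset.eq_insert_image_and_injOn_of_card_lt {α β : Type*} [DecidableEq β]
    {s : Finset α} {t : Finset β} {f : α → β} {c : β} (hst : s.card < t.card)
    (ht : t ⊆ insert c (s.image f)) : t = insert c (s.image f) ∧ Set.InjOn f s := by
  have h₁ := Finset.card_le_card ht
  have h₂ := Finset.card_insert_le c (s.image f)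
  have h₃ : (s.image f).card ≤ s.card := Finset.card_image_le
  exact ⟨Finset.eq_of_subset_of_card_le ht (by omega), Finset.card_image_iff.mp (by omega)⟩

section DeleteVertex

variable {v : V} {x : ({v}ᶜ : Set V)}

theorem kempeChain_induce_compl_singleton_iff
    (hv : KempeChain G Φ a b x v → ∀ u : ({v}ᶜ : Set V), G.Adj v u → (Φ u = a ∨ Φ u = b) →
      KempeChain (G.induce {v}ᶜ) (fun z => Φ z) a b x u)
    (w : ({v}ᶜ : Set V)) :
    KempeChain G Φ a b x w ↔ KempeChain (G.induce {v}ᶜ) (fun z => Φ z) a b x w := by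
  refine ⟨fun h => ?_, KempeChain.of_induce⟩
  suffices ∀ y, KempeChain G Φ a b x y →
      y = v ∨ ∃ hy : y ≠ v, KempeChain (G.induce {v}ᶜ) (fun z => Φ z) a b x ⟨y, hy⟩ from
    (this w h).resolve_left w.2 |>.2
  intro y hy
  induction hy with
  | refl => exact .inr ⟨x.2, .refl⟩
  | @tail p q hxp hpq ih =>
    by_cases hq : q = v
    · exact .inl hq
    refine .inr ⟨hq, ?_⟩
    rcases ih with rfl | ⟨hp, hc⟩
    · exact hv hxp ⟨q, hq⟩ hpq.1 hpq.2.2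
    · exact hc.tail hpq

theorem exists_adj_of_kempeChain_compl_singleton (h : KempeChain G Φ a b x v) :
    ∃ u : ({v}ᶜ : Set V), G.Adj u v ∧ (Φ u = a ∨ Φ u = b) ∧
      KempeChain (G.induce {v}ᶜ) (fun z => Φ z) a b x u := by
  by_contra hnone
  suffices ∀ y, KempeChain G Φ a b x y →
      ∃ hy : y ≠ v, KempeChain (G.induce {v}ᶜ) (fun z => Φ z) a b x ⟨y, hy⟩ from
    (this v h).1 rfl
  intro y hy
  induction hy with
  | refl => exact ⟨x.2, .refl⟩
  | @tail p q _ hpq ih =>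
    obtain ⟨hp, hc⟩ := ih
    have hq : q ≠ v := by
      rintro rfl
      exact hnone ⟨⟨p, hp⟩, hpq.1, hpq.2.1, hc⟩
    exact ⟨hq, hc.tail hpq⟩

theorem exists_lEquiv_restrict_eq_kempeSwap (hΦ : IsLColoring G L Φ) (hab : a ≠ b)
    (hx : Φ x = a ∨ Φ x = b)
    (hτ : IsLColoring (G.induce {v}ᶜ) (fun z => L z)
      (kempeSwap (G.induce {v}ᶜ) (fun z => Φ z) a b x))
    (hv : KempeChain G Φ a b x v → ∀ u : ({v}ᶜ : Set V), G.Adj v u → (Φ u = a ∨ Φ u = b) →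
      KempeChain (G.induce {v}ᶜ) (fun z => Φ z) a b x u)
    (hvL : kempeSwap G Φ a b x v ∈ L v) :
    ∃ Ψ, LEquiv G L Φ Ψ ∧
      (fun z : ({v}ᶜ : Set V) => Ψ z) = kempeSwap (G.induce {v}ᶜ) (fun z => Φ z) a b x := by
  have hiff := kempeChain_induce_compl_singleton_iff hv
  refine ⟨_, .single (kempeStep_of_induce hΦ hab hx hτ hiff fun w hw => ?_),
    funext (kempeSwap_induce_apply hiff)⟩
  rwa [show w = v from not_not.mp hw]

theorem exists_lEquiv_restrict_eq_kempeSwap_of_not_kempeChain (hΦ : IsLColoring G L Φ)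
    (hab : a ≠ b) (hx : Φ x = a ∨ Φ x = b)
    (hτ : IsLColoring (G.induce {v}ᶜ) (fun z => L z)
      (kempeSwap (G.induce {v}ᶜ) (fun z => Φ z) a b x))
    (hvx : ¬ KempeChain G Φ a b x v) :
    ∃ Ψ, LEquiv G L Φ Ψ ∧
      (fun z : ({v}ᶜ : Set V) => Ψ z) = kempeSwap (G.induce {v}ᶜ) (fun z => Φ z) a b x :=
  exists_lEquiv_restrict_eq_kempeSwap hΦ hab hx hτ (fun h => (hvx h).elim)
    (by simpa [kempeSwap, hvx] using hΦ.1 v)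

theorem exists_lEquiv_restrict_eq_kempeSwap_of_kempeChain [Fintype (G.neighborSet v)]
    (hL : (G.neighborFinset v).card < (L v).card) (hΦ : IsLColoring G L Φ) (hab : a ≠ b)
    (hx : Φ x = a ∨ Φ x = b)
    (hτ : IsLColoring (G.induce {v}ᶜ) (fun z => L z)
      (kempeSwap (G.induce {v}ᶜ) (fun z => Φ z) a b x))
    (hvx : KempeChain G Φ a b x v) :
    ∃ Ψ, LEquiv G L Φ Ψ ∧
      (fun z : ({v}ᶜ : Set V) => Ψ z) = kempeSwap (G.induce {v}ᶜ) (fun z => Φ z) a b x := by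
  obtain ⟨u, hu, hua, hxu⟩ := exists_adj_of_kempeChain_compl_singleton hvx
  have hva := hvx.color_mem hx
  have huv := hΦ.2 hu
  by_cases hsub : L v ⊆ insert (Φ v) ((G.neighborFinset v).image Φ)
  · obtain ⟨hLv, hinj⟩ := Finset.eq_insert_image_and_injOn_of_card_lt hL hsub
    refine exists_lEquiv_restrict_eq_kempeSwap hΦ hab hx hτ (fun _ w hvw hwa => ?_) ?_
    · have hw : Φ w ≠ Φ v := hΦ.2 hvw.symm
      have : w = u := Subtype.ext <| hinj (by simpa using hvw) (by simpa using hu.symm) (by omega)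
      exact this ▸ hxu
    · have : kempeSwap G Φ a b x v = Φ u := by
        simp only [kempeSwap, if_pos hvx]
        split_ifs <;> omega
      rw [this, hLv]
      exact Finset.mem_insert_of_mem (Finset.mem_image_of_mem Φ (by simpa using hu.symm))
  · obtain ⟨d, hdL, hd⟩ := Finset.not_subset.mp hsub
    have hdv : Φ v ≠ d := fun h => hd (h ▸ Finset.mem_insert_self _ _)
    have hdN : ∀ w, G.Adj v w → Φ w ≠ d := fun w hvw h =>
      hd (Finset.mem_insert_of_mem (Finset.mem_image.mpr ⟨w, by simpa using hvw, h⟩))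
    have hdu : Φ u ≠ d := hdN u hu.symm
    have hrestrict :
        (fun z : ({v}ᶜ : Set V) => Function.update Φ v d z) = fun z : ({v}ᶜ : Set V) => Φ z :=
      funext fun z => Function.update_of_ne z.2 d Φ
    have hx₁ : Function.update Φ v d x = a ∨ Function.update Φ v d x = b := by
      rwa [Function.update_of_ne x.2]
    have hvx₁ : ¬ KempeChain G (Function.update Φ v d) a b x v := fun h => by
      have := h.color_mem hx₁
      rw [Function.update_self] at this
      omega
    obtain ⟨Ψ, hΨ, hres⟩ := exists_lEquiv_restrict_eq_kempeSwap_of_not_kempeChain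
      (hΦ.update hdL hdN) hab hx₁ (hrestrict ▸ hτ) hvx₁
    exact ⟨Ψ, .head (kempeStep_update hΦ hdL hdv hdN) hΨ, hres.trans (by rw [hrestrict])⟩

theorem exists_lEquiv_restrict_eq_of_kempeStep [Fintype (G.neighborSet v)]
    (hL : (G.neighborFinset v).card < (L v).card) (hΦ : IsLColoring G L Φ)
    {τ : ({v}ᶜ : Set V) → ℕ}
    (h : KempeStep (G.induce {v}ᶜ) (fun z => L z) (fun z => Φ z) τ) :
    ∃ Ψ, LEquiv G L Φ Ψ ∧ (fun z : ({v}ᶜ : Set V) => Ψ z) = τ := by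
  obtain ⟨a, b, x, hab, hx, rfl, hτ⟩ := h
  by_cases hvx : KempeChain G Φ a b x v
  · exact exists_lEquiv_restrict_eq_kempeSwap_of_kempeChain hL hΦ hab hx hτ hvx
  · exact exists_lEquiv_restrict_eq_kempeSwap_of_not_kempeChain hΦ hab hx hτ hvx

theorem exists_lEquiv_restrict_eq_of_lEquiv [Fintype (G.neighborSet v)]
    (hL : (G.neighborFinset v).card < (L v).card) (hΦ : IsLColoring G L Φ)
    {τ : ({v}ᶜ : Set V) → ℕ}
    (h : LEquiv (G.induce {v}ᶜ) (fun z => L z) (fun z => Φ z) τ) :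
    ∃ Ψ, LEquiv G L Φ Ψ ∧ (fun z : ({v}ᶜ : Set V) => Ψ z) = τ := by
  induction h with
  | refl => exact ⟨Φ, .refl, rfl⟩
  | tail _ hstep ih =>
    obtain ⟨Ψ, hΨ, rfl⟩ := ih
    obtain ⟨Ψ', hΨ', hres⟩ := exists_lEquiv_restrict_eq_of_kempeStep hL (hΨ.isLColoring hΦ) hstep
    exact ⟨Ψ', hΨ.trans hΨ', hres⟩

theorem lEquiv_of_eqOn_compl_singleton {Ψ : V → ℕ} (hΦ : IsLColoring G L Φ)
    (hΨ : IsLColoring G L Ψ) (h : ∀ w, w ≠ v → Φ w = Ψ w) : LEquiv G L Φ Ψ := by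
  by_cases hv : Φ v = Ψ v
  · have : Φ = Ψ := funext fun w => if hw : w = v then hw ▸ hv else h w hw
    exact this ▸ .refl
  · have hupd : Function.update Φ v (Ψ v) = Ψ := by
      funext w
      by_cases hw : w = v
      · simp [hw]
      · simp [hw, h w hw]
    have hN : ∀ u, G.Adj v u → Φ u ≠ Ψ v := fun u hvu =>
      h u (G.ne_of_adj hvu).symm ▸ (hΨ.2 hvu).symm
    exact .single (hupd ▸ kempeStep_update hΦ (hΨ.1 v) hv hN)

end DeleteVertex

end KempeLift

theorem corollary2_general {V : Type*} [Fintype V] (G : SimpleGraph V) (f : V → ℕ)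
    (v : V) (hv : (G.neighborSet v).ncard < f v)
    (hGv : FSwappable (G.induce ({v}ᶜ : Set V)) fun x => f ↑x) :
    FSwappable G f := by
  intro L hL φ ψ hφ hψ
  have hLv : (G.neighborFinset v).card < (L v).card := by
    rwa [hL v, SimpleGraph.neighborFinset_def, ← Set.ncard_eq_toFinset_card']
  obtain ⟨Ψ, hφΨ, hres⟩ := exists_lEquiv_restrict_eq_of_lEquiv hLv hφ
    (hGv _ (fun z => hL z) _ _ (hφ.induce _) (hψ.induce _))
  exact hφΨ.trans <| lEquiv_of_eqOn_compl_singleton (hφΨ.isLColoring hφ) hψ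
    fun w hw => congrFun hres ⟨w, hw⟩

/-- **Corollary 2.** Fix a graph `G`, a function `f : V(G) → ℤ⁺`, and a vertex `v` with
`f(v) > d(v)`.  If `G − v` is `f`-swappable, then `G` is `f`-swappable. -/
theorem corollary2 {V : Type*} [Fintype V] (G : SimpleGraph V) (f : V → ℕ) (hf : ∀ u, 0 < f u)
    (v : V) (hv : (G.neighborSet v).ncard < f v)
    (hGv : FSwappable (G.induce ({v}ᶜ : Set V)) fun x => f ↑x) :
    FSwappable G f :=
  corollary2_general G f v hv hGv
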